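/- arXiv:2507.07269 — 4 statements merged into one kernel-verified Lean document; each statement's English description precedes it below -/
import Mathlib

section
/- For every c > 0 there exists a constant C > 0 (depending only on c) such that the following holds. Let H = (V, 𝓔) be a finite hypergraph on n ≥ 2 vertices that admits a hereditarily c-linear Delaunay graph, and let 0 < α ≤ 1. If at least α·n(n−1)/2 of the unordered pairs of vertices of H are friends, then there exists a hyperedge e ∈ 𝓔 with |e| ≥ α·n/C. -/
/-- The Delaunay edges of the subhypergraph of `(V, E)` induced on `S`:
pairs `{u, v} ⊆ S` that arise as `e ∩ S` for some hyperedge `e ∈ E`. -/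
def delaunayPairs {V : Type} [DecidableEq V] (E : Finset (Finset V)) (S : Finset V) :
    Set (Finset V) :=
  {p | p.card = 2 ∧ ∃ e ∈ E, e ∩ S = p}

/-- The hypergraph `(V, E)` admits a hereditarily `c`-linear Delaunay graph: for every
(nonempty) subset `S` of the vertices, the Delaunay graph of the induced subhypergraph
has fewer than `c * |S|` edges. -/
def HerLinearDelaunay {V : Type} [DecidableEq V] (c : ℝ) (E : Finset (Finset V)) : Prop :=
  ∀ S : Finset V, S.Nonempty → ((delaunayPairs E S).ncard : ℝ) < c * S.card

/-- The pairs of vertices that are friends: `{u, v}` with `u ≠ v` such that some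
hyperedge contains both. -/
def friendPairs {V : Type} [DecidableEq V] (E : Finset (Finset V)) : Set (Finset V) :=
  {p | p.card = 2 ∧ ∃ e ∈ E, p ⊆ e}

/-!
Clarkson–Shor sampling. Let `k` be the largest size of a hyperedge and keep every vertex
independently with probability `p = 1/(2k)`. A friend pair `{u, v}` witnessed by a hyperedge
`e ⊇ {u, v}` is a Delaunay edge of the sample `S` as soon as `e ∩ S = {u, v}`, which happens with
probability `p² (1 - p)^(|e| - 2) ≥ p²/2`. Hence the expected number of Delaunay edges of `S` is at
least `p²/2` times the number of friend pairs, while hereditary linearity bounds it by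
`c · E|S| = c p n`. So there are at most `4 c n k` friend pairs, and comparing with
`α n (n - 1)/2 ≥ α n²/4` gives `k ≥ α n / (16 c)`.
-/

open Finset

section Sampling

variable {V : Type*} [Fintype V] [DecidableEq V]

/-- The probability that a random subset of `V`, containing each vertex independently with
probability `p`, equals `S`. -/
def sampleWeight (p : ℝ) (S : Finset V) : ℝ := p ^ #S * (1 - p) ^ #Sᶜ

lemma sampleWeight_nonneg {p : ℝ} (hp0 : 0 ≤ p) (hp1 : p ≤ 1) (S : Finset V) :
    0 ≤ sampleWeight p S := by
  have : 0 ≤ 1 - p := by linarith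
  unfold sampleWeight
  positivity

/-- A sample with `e ∩ S = A` is `A ∪ T` for a free choice of `T ⊆ eᶜ`. -/
lemma sum_sampleWeight_inter_eq (p : ℝ) {e A : Finset V} (hA : A ⊆ e) :
    ∑ S with e ∩ S = A, sampleWeight p S = p ^ #A * (1 - p) ^ #(e \ A) := by
  have hdisj : ∀ T ⊆ eᶜ, Disjoint A T := fun T hT =>
    disjoint_of_subset_left hA (subset_compl_iff_disjoint_left.mp hT)
  have himage : ({S | e ∩ S = A} : Finset (Finset V)) = eᶜ.powerset.image (A ∪ ·) := by
    ext S
    simp only [mem_filter, mem_univ, true_and, mem_image, mem_powerset]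
    constructor
    · rintro rfl
      exact ⟨S \ e, sdiff_eq_inter_compl S e ▸ inter_subset_right, by ext; simp; tauto⟩
    · rintro ⟨T, hT, rfl⟩
      ext x
      have := @hT x
      simp only [mem_inter, mem_union, mem_compl] at this ⊢
      have := @hA x
      tauto
  have hinj : Set.InjOn (A ∪ ·) (eᶜ.powerset : Set (Finset V)) := by
    intro T hT T' hT' h
    simp only [coe_powerset, Set.mem_preimage, Set.mem_powerset_iff, coe_subset] at hT hT'
    have h : A ∪ T = A ∪ T' := h
    rw [← (hdisj T hT).sdiff_eq_right, ← (hdisj T' hT').sdiff_eq_right, ← union_sdiff_left, h,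
      union_sdiff_left]
  have hsplit : ∀ T ∈ eᶜ.powerset, sampleWeight p (A ∪ T)
      = p ^ #A * (1 - p) ^ #(e \ A) * (p ^ #T * (1 - p) ^ (#eᶜ - #T)) := by
    intro T hT
    rw [mem_powerset] at hT
    have hcompl : (A ∪ T)ᶜ = (e \ A) ∪ (eᶜ \ T) := by
      ext x
      have := @hT x
      have := @hA x
      simp only [mem_compl, mem_union, mem_sdiff] at *
      tauto
    have hdisj' : Disjoint (e \ A) (eᶜ \ T) := disjoint_of_subset_left sdiff_subset
      (disjoint_of_subset_right sdiff_subset disjoint_compl_right)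
    rw [sampleWeight, card_union_of_disjoint (hdisj T hT), hcompl, card_union_of_disjoint hdisj',
      card_sdiff_of_subset hT]
    ring
  rw [himage, sum_image hinj, sum_congr rfl hsplit, ← mul_sum, sum_pow_mul_eq_add_pow]
  simp

lemma sum_sampleWeight_mul_card (p : ℝ) :
    ∑ S : Finset V, sampleWeight p S * #S = p * Fintype.card V := by
  calc ∑ S : Finset V, sampleWeight p S * #S
      = ∑ S : Finset V, ∑ _v ∈ S, sampleWeight p S := by simp [mul_comm]
    _ = ∑ v : V, ∑ S with {v} ∩ S = {v}, sampleWeight p S := sum_comm' (by simp)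
    _ = ∑ _v : V, p := sum_congr rfl fun v _ => by
        simpa using sum_sampleWeight_inter_eq p (subset_refl {v})
    _ = p * Fintype.card V := by simp [mul_comm]

end Sampling

lemma ncard_delaunayPairs_le {V : Type} [DecidableEq V] {E : Finset (Finset V)} {c : ℝ}
    (hE : HerLinearDelaunay c E) (S : Finset V) :
    ((delaunayPairs E S).ncard : ℝ) ≤ c * #S := by
  obtain rfl | hS := S.eq_empty_or_nonempty
  · have : delaunayPairs E ∅ = ∅ := by
      ext p
      simp only [delaunayPairs, inter_empty, Set.mem_ofPred_eq, Set.mem_empty_iff_false, iff_false]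
      rintro ⟨hp, -, -, rfl⟩
      simp at hp
    simp [this]
  · exact (hE S hS).le

section FriendPairs

variable {V : Type} [Fintype V] [DecidableEq V] {E : Finset (Finset V)}

lemma sum_sampleWeight_mul_ncard_delaunayPairs_le {c p : ℝ} (hE : HerLinearDelaunay c E)
    (hp0 : 0 ≤ p) (hp1 : p ≤ 1) :
    ∑ S : Finset V, sampleWeight p S * (delaunayPairs E S).ncard ≤ c * p * Fintype.card V := by
  calc ∑ S : Finset V, sampleWeight p S * (delaunayPairs E S).ncard
      ≤ ∑ S : Finset V, sampleWeight p S * (c * #S) := by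
        gcongr with S
        · exact sampleWeight_nonneg hp0 hp1 S
        · exact ncard_delaunayPairs_le hE S
    _ = c * p * Fintype.card V := by
        rw [mul_assoc, ← sum_sampleWeight_mul_card, mul_sum]
        exact sum_congr rfl fun S _ => by ring

lemma ncard_friendPairs_mul_le_sum_sampleWeight {k : ℕ} (hk : ∀ e ∈ E, #e ≤ k) {p : ℝ}
    (hp0 : 0 ≤ p) (hp1 : p ≤ 1) :
    (friendPairs E).ncard * (p ^ 2 * (1 - p) ^ k)
      ≤ ∑ S : Finset V, sampleWeight p S * (delaunayPairs E S).ncard := by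
  have hfin := (friendPairs E).toFinite
  set F := hfin.toFinset
  choose! f hfE hqf using fun q (hq : q ∈ friendPairs E) => hq.2
  have hpattern : ∀ q ∈ F, p ^ 2 * (1 - p) ^ k ≤ ∑ S with f q ∩ S = q, sampleWeight p S := by
    intro q hq
    rw [Set.Finite.mem_toFinset] at hq
    rw [sum_sampleWeight_inter_eq p (hqf q hq), hq.1]
    exact mul_le_mul_of_nonneg_left (pow_le_pow_of_le_one (by linarith) (by linarith)
      ((card_le_card sdiff_subset).trans (hk _ (hfE q hq)))) (sq_nonneg p)
  have hfilter : ∀ S : Finset V, #{q ∈ F | f q ∩ S = q} ≤ (delaunayPairs E S).ncard := by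
    intro S
    rw [← Set.ncard_coe_finset]
    refine Set.ncard_le_ncard (fun q hq => ?_)
    simp only [coe_filter, Set.Finite.mem_toFinset, F] at hq
    exact ⟨hq.1.1, f q, hfE q hq.1, hq.2⟩
  calc (friendPairs E).ncard * (p ^ 2 * (1 - p) ^ k)
      = ∑ q ∈ F, p ^ 2 * (1 - p) ^ k := by
        rw [Set.ncard_eq_toFinset_card _ hfin, sum_const, nsmul_eq_mul]
    _ ≤ ∑ q ∈ F, ∑ S with f q ∩ S = q, sampleWeight p S := sum_le_sum hpattern
    _ = ∑ S : Finset V, ∑ q ∈ F with f q ∩ S = q, sampleWeight p S :=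
        sum_comm' (by simp)
    _ = ∑ S : Finset V, sampleWeight p S * #{q ∈ F | f q ∩ S = q} := by
        simp [mul_comm]
    _ ≤ ∑ S : Finset V, sampleWeight p S * (delaunayPairs E S).ncard := by
        gcongr with S
        · exact sampleWeight_nonneg hp0 hp1 S
        · exact_mod_cast hfilter S

lemma ncard_friendPairs_le {c : ℝ} (hE : HerLinearDelaunay c E) {k : ℕ} (hk : ∀ e ∈ E, #e ≤ k) :
    ((friendPairs E).ncard : ℝ) ≤ 4 * c * Fintype.card V * k := by
  obtain rfl | hk0 := k.eq_zero_or_pos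
  · have hempty : friendPairs E = ∅ := by
      refine Set.eq_empty_of_forall_notMem fun q ⟨hq, e, he, hqe⟩ => ?_
      have := (card_le_card hqe).trans (hk e he)
      omega
    simp [hempty]
  have hk1 : (1 : ℝ) ≤ k := by exact_mod_cast hk0
  set p : ℝ := 1 / (2 * k) with hp
  have hp0 : 0 < p := by positivity
  have hp1 : p ≤ 1 := by rw [hp, div_le_one (by positivity)]; linarith
  have hbernoulli : 1 / 2 ≤ (1 - p) ^ k := by
    have hkp : k * p = 1 / 2 := by rw [hp]; field_simp
    have := one_add_mul_le_pow (a := -p) (by linarith) k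
    rw [← sub_eq_add_neg] at this
    linarith
  have hcount := (ncard_friendPairs_mul_le_sum_sampleWeight hk hp0.le hp1).trans
    (sum_sampleWeight_mul_ncard_delaunayPairs_le hE hp0.le hp1)
  have hF : ((friendPairs E).ncard : ℝ) * p ≤ 2 * c * Fintype.card V := by
    refine le_of_mul_le_mul_right ?_ hp0
    nlinarith [mul_le_mul_of_nonneg_left hbernoulli
      (by positivity : (0 : ℝ) ≤ (friendPairs E).ncard * p ^ 2)]
  rw [hp, mul_one_div, div_le_iff₀ (by positivity)] at hF
  linarith

end FriendPairs

/-- Fractional Helly for hypergraphs with a hereditarily linear Delaunay graph: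
if at least `α · n(n-1)/2` pairs of vertices are friends, then some hyperedge has
size at least `α · n / C`. -/
theorem fractional_helly_herLinearDelaunay :
    ∀ c : ℝ, 0 < c → ∃ C : ℝ, 0 < C ∧
      ∀ (V : Type) [Fintype V] [DecidableEq V] (E : Finset (Finset V)) (α : ℝ),
        2 ≤ Fintype.card V →
        HerLinearDelaunay c E →
        0 < α → α ≤ 1 →
        α * (Fintype.card V) * ((Fintype.card V : ℝ) - 1) / 2 ≤ ((friendPairs E).ncard : ℝ) →
        ∃ e ∈ E, α * (Fintype.card V : ℝ) / C ≤ (e.card : ℝ) := by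
  intro c hc
  refine ⟨16 * c, by positivity, fun V _ _ E α hn hE hα _ hfriend => ?_⟩
  have hn2 : (2 : ℝ) ≤ Fintype.card V := by exact_mod_cast hn
  have hF0 : (friendPairs E).ncard ≠ 0 := by
    intro h
    rw [h, Nat.cast_zero] at hfriend
    nlinarith [mul_pos hα (by linarith : (0 : ℝ) < Fintype.card V)]
  obtain ⟨-, -, e, he, -⟩ := Set.nonempty_of_ncard_ne_zero hF0
  obtain ⟨e, he, hmax⟩ := E.exists_max_image card ⟨e, he⟩
  refine ⟨e, he, ?_⟩
  have hF := ncard_friendPairs_le hE hmax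
  rw [div_le_iff₀ (by positivity)]
  nlinarith [mul_pos hα (by linarith : (0 : ℝ) < Fintype.card V)]
end

section
/- There exists an absolute constant C > 0 such that the following holds. Let H = (V, 𝓔) be a finite hypergraph on n vertices that admits a hereditarily c-linear Delaunay graph (c > 0), and suppose every hyperedge of H has size at most k, where k ≥ 2. Then the number of unordered pairs of vertices of H that are friends is at most C·c·n·k. -/
/-!
Let `S` be a random subset of `V` containing each vertex independently with probability `p`.
By hereditary linearity the expected number of Delaunay edges of `H|_S` is at most
`c · E|S| = c n p`. A friend pair `{u, v} ⊆ e` is a Delaunay edge of `H|_S` whenever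
`S ∩ e = {u, v}`, an event of probability `p² (1 - p)^(|e| - 2) ≥ p² (1 - p)^k`.
For `p = 1/(2k)` Bernoulli's inequality gives `(1 - p)^k ≥ 1/2`, so there are at most `4 c n k`
friend pairs.
-/

open Finset

section BernoulliWeight

variable {V : Type*} [Fintype V] [DecidableEq V]

theorem sum_Icc_pow_mul_pow_card_compl {R : Type*} [CommSemiring R] (p q : R)
    {A T : Finset V} (hAT : A ⊆ T) :
    ∑ S ∈ Icc A T, p ^ #S * q ^ #Sᶜ = p ^ #A * q ^ #Tᶜ * (p + q) ^ #(T \ A) := by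
  have hdisj : ∀ U ∈ (T \ A).powerset, Disjoint A U := fun U hU =>
    disjoint_of_subset_right (mem_powerset.1 hU) disjoint_sdiff
  rw [Icc_eq_image_powerset hAT, sum_image, ← sum_pow_mul_eq_add_pow, mul_sum]
  · refine sum_congr rfl fun U hU => ?_
    have hUcard : #U ≤ #(T \ A) := card_le_card (mem_powerset.1 hU)
    have hTA : #(T \ A) = #T - #A := card_sdiff_of_subset hAT
    have hAT' := card_le_card hAT
    have hT := card_le_univ T
    rw [card_compl, card_compl, card_union_of_disjoint (hdisj U hU),
      show Fintype.card V - (#A + #U) = (Fintype.card V - #T) + (#(T \ A) - #U) by omega,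
      pow_add, pow_add]
    ring
  · intro U hU U' hU' h
    rw [← union_sdiff_cancel_left (hdisj U hU), ← union_sdiff_cancel_left (hdisj U' hU')]
    exact congrArg (· \ A) h

def bernoulliWeight (p : ℝ) (S : Finset V) : ℝ := p ^ #S * (1 - p) ^ #Sᶜ

theorem bernoulliWeight_nonneg {p : ℝ} (hp0 : 0 ≤ p) (hp1 : p ≤ 1) (S : Finset V) :
    0 ≤ bernoulliWeight p S :=
  mul_nonneg (pow_nonneg hp0 _) (pow_nonneg (sub_nonneg.2 hp1) _)

theorem sum_Icc_bernoulliWeight (p : ℝ) {A T : Finset V} (hAT : A ⊆ T) :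
    ∑ S ∈ Icc A T, bernoulliWeight p S = p ^ #A * (1 - p) ^ #Tᶜ := by
  simp [bernoulliWeight, sum_Icc_pow_mul_pow_card_compl _ _ hAT]

theorem sum_bernoulliWeight_mul_card (p : ℝ) :
    ∑ S : Finset V, bernoulliWeight p S * #S = Fintype.card V * p := by
  calc ∑ S : Finset V, bernoulliWeight p S * #S
      = ∑ S : Finset V, ∑ _v ∈ S, bernoulliWeight p S := by simp [mul_comm]
    _ = ∑ v, ∑ S ∈ Icc {v} univ, bernoulliWeight p S := sum_comm' (by simp [and_comm])
    _ = Fintype.card V * p := by simp [sum_Icc_bernoulliWeight]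

end BernoulliWeight

section Hypergraph

variable {V : Type} [DecidableEq V] (E : Finset (Finset V))

def delaunayFinset (S : Finset V) : Finset (Finset V) := {P ∈ E.image (· ∩ S) | #P = 2}

def friendFinset : Finset (Finset V) := E.biUnion (powersetCard 2)

theorem coe_delaunayFinset (S : Finset V) :
    (delaunayFinset E S : Set (Finset V)) = delaunayPairs E S := by
  ext P
  simp [delaunayFinset, delaunayPairs, and_comm]

theorem coe_friendFinset : (friendFinset E : Set (Finset V)) = friendPairs E := by
  ext P
  simp only [friendFinset, friendPairs, coe_biUnion, Set.mem_iUnion, mem_coe, mem_powersetCard,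
    Set.mem_ofPred_eq]
  tauto

theorem delaunayFinset_subset_friendFinset (S : Finset V) :
    delaunayFinset E S ⊆ friendFinset E := by
  intro P hP
  simp only [delaunayFinset, mem_filter, mem_image] at hP
  obtain ⟨⟨e, he, rfl⟩, hcard⟩ := hP
  exact mem_biUnion.2 ⟨e, he, mem_powersetCard.2 ⟨inter_subset_left, hcard⟩⟩

theorem delaunayFinset_empty : delaunayFinset E ∅ = ∅ := by
  simp [delaunayFinset]

theorem mem_delaunayFinset_of_subset {P e S : Finset V} (he : e ∈ E) (hP : #P = 2)
    (hPe : P ⊆ e) (hPS : P ⊆ S) (hSe : Disjoint S (e \ P)) : P ∈ delaunayFinset E S := by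
  refine mem_filter.2 ⟨mem_image.2 ⟨e, he, ?_⟩, hP⟩
  refine Subset.antisymm (fun x hx => ?_) (subset_inter hPe hPS)
  by_contra hxP
  obtain ⟨hxe, hxS⟩ := mem_inter.1 hx
  exact disjoint_left.1 hSe hxS (mem_sdiff.2 ⟨hxe, hxP⟩)

variable [Fintype V]

theorem pow_two_mul_le_sum_bernoulliWeight {p : ℝ} (hp0 : 0 ≤ p) (hp1 : p ≤ 1)
    {P e : Finset V} (he : e ∈ E) (hP : #P = 2) (hPe : P ⊆ e) :
    p ^ 2 * (1 - p) ^ (#e - 2) ≤ ∑ S with P ∈ delaunayFinset E S, bernoulliWeight p S := by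
  calc p ^ 2 * (1 - p) ^ (#e - 2) = ∑ S ∈ Icc P (e \ P)ᶜ, bernoulliWeight p S := by
        rw [sum_Icc_bernoulliWeight _ (subset_compl_iff_disjoint_right.2 disjoint_sdiff),
          compl_compl, card_sdiff_of_subset hPe, hP]
    _ ≤ ∑ S with P ∈ delaunayFinset E S, bernoulliWeight p S := by
        refine sum_le_sum_of_subset_of_nonneg (fun S hS => ?_)
          fun S _ _ => bernoulliWeight_nonneg hp0 hp1 S
        obtain ⟨hPS, hSe⟩ := mem_Icc.1 hS
        exact mem_filter.2 ⟨mem_univ S, mem_delaunayFinset_of_subset E he hP hPe hPS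
          (subset_compl_iff_disjoint_right.1 hSe)⟩

theorem sum_bernoulliWeight_mul_card_delaunayFinset_le {c p : ℝ} (hp0 : 0 ≤ p) (hp1 : p ≤ 1)
    (hH : HerLinearDelaunay c E) :
    ∑ S, bernoulliWeight p S * #(delaunayFinset E S) ≤ c * (Fintype.card V * p) := by
  rw [← sum_bernoulliWeight_mul_card, mul_sum]
  refine sum_le_sum fun S _ => ?_
  obtain rfl | hS := S.eq_empty_or_nonempty
  · simp [delaunayFinset_empty]
  · have hlin := (hH S hS).le
    rw [← coe_delaunayFinset, Set.ncard_coe_finset] at hlin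
    calc bernoulliWeight p S * #(delaunayFinset E S)
        ≤ bernoulliWeight p S * (c * #S) :=
          mul_le_mul_of_nonneg_left hlin (bernoulliWeight_nonneg hp0 hp1 S)
      _ = c * (bernoulliWeight p S * #S) := by ring

theorem card_friendFinset_mul_le {c p : ℝ} {k : ℕ} (hp0 : 0 ≤ p) (hp1 : p ≤ 1)
    (hE : ∀ e ∈ E, #e ≤ k) (hH : HerLinearDelaunay c E) :
    #(friendFinset E) * (p ^ 2 * (1 - p) ^ k) ≤ c * (Fintype.card V * p) := by
  calc #(friendFinset E) * (p ^ 2 * (1 - p) ^ k)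
      = ∑ _P ∈ friendFinset E, p ^ 2 * (1 - p) ^ k := by simp
    _ ≤ ∑ P ∈ friendFinset E, ∑ S with P ∈ delaunayFinset E S, bernoulliWeight p S := by
        refine sum_le_sum fun P hP => ?_
        obtain ⟨e, he, hPe⟩ := mem_biUnion.1 hP
        obtain ⟨hPe, hP⟩ := mem_powersetCard.1 hPe
        refine le_trans ?_ (pow_two_mul_le_sum_bernoulliWeight E hp0 hp1 he hP hPe)
        have := hE e he
        exact mul_le_mul_of_nonneg_left
          (pow_le_pow_of_le_one (sub_nonneg.2 hp1) (by linarith) (by omega)) (sq_nonneg p)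
    _ = ∑ S, ∑ P ∈ delaunayFinset E S, bernoulliWeight p S :=
        sum_comm' fun P S => by
          have := @delaunayFinset_subset_friendFinset _ _ E S P
          simp only [mem_filter, mem_univ, true_and]
          tauto
    _ = ∑ S, bernoulliWeight p S * #(delaunayFinset E S) := by simp [mul_comm]
    _ ≤ c * (Fintype.card V * p) :=
        sum_bernoulliWeight_mul_card_delaunayFinset_le E hp0 hp1 hH

theorem card_friendFinset_le {c : ℝ} {k : ℕ} (hk : 0 < k) (hE : ∀ e ∈ E, #e ≤ k)
    (hH : HerLinearDelaunay c E) :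
    (#(friendFinset E) : ℝ) ≤ 4 * c * Fintype.card V * k := by
  have hk1 : (1 : ℝ) ≤ k := by exact_mod_cast hk
  obtain ⟨p, hpk⟩ : ∃ p : ℝ, p * (2 * k) = 1 :=
    ⟨(2 * k)⁻¹, inv_mul_cancel₀ (by positivity)⟩
  have hp0 : 0 < p := by nlinarith
  have hp1 : p ≤ 1 := by nlinarith
  have hbernoulli : 1 / 2 ≤ (1 - p) ^ k := by
    have := one_add_mul_le_pow (a := -p) (by linarith) k
    rw [← sub_eq_add_neg] at this
    linarith
  have hcount := card_friendFinset_mul_le E hp0.le hp1 hE hH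
  set F : ℝ := (#(friendFinset E) : ℝ)
  have hFp : F * p ≤ 2 * c * Fintype.card V := by
    refine le_of_mul_le_mul_right ?_ hp0
    calc F * p * p = 2 * (F * (p ^ 2 * (1 / 2))) := by ring
      _ ≤ 2 * (F * (p ^ 2 * (1 - p) ^ k)) := by gcongr
      _ ≤ 2 * c * Fintype.card V * p := by linarith
  calc F = F * p * (2 * k) := by rw [mul_assoc, hpk, mul_one]
    _ ≤ 2 * c * Fintype.card V * (2 * k) := by gcongr
    _ = 4 * c * Fintype.card V * k := by ring

end Hypergraph

/-- In a hypergraph with a hereditarily `c`-linear Delaunay graph whose hyperedges all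
have size at most `k`, the number of friend pairs is at most `C · c · n · k`. -/
theorem friendPairs_card_le :
    ∃ C : ℝ, 0 < C ∧
      ∀ (V : Type) [Fintype V] [DecidableEq V] (E : Finset (Finset V)) (c : ℝ) (k : ℕ),
        0 < c → 2 ≤ k →
        (∀ e ∈ E, e.card ≤ k) →
        HerLinearDelaunay c E →
        ((friendPairs E).ncard : ℝ) ≤ C * c * (Fintype.card V) * k := by
  refine ⟨4, by norm_num, fun V _ _ E c k _ hk hE hH => ?_⟩
  rw [← coe_friendFinset, Set.ncard_coe_finset]
  exact card_friendFinset_le E (by omega) hE hH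
end

section
/- Let H = (V, 𝓔) be a finite hypergraph on n vertices that admits a hereditarily c-linear Delaunay graph (c > 0), suppose every hyperedge of H has size at most k, where k ≥ 2, and let X denote the set of unordered pairs of vertices of H that are friends. Then for every real x with 0 < x < 1 one has (1−x)^{k−2} · x² · |X| ≤ c · x · n. -/
open Finset

lemma sum_w_aux {V : Type} [DecidableEq V] [Fintype V] (x : ℝ) (A B : Finset V)
    (hAB : Disjoint A B) :
    ∑ S ∈ Finset.univ.powerset.filter (fun S => A ⊆ S ∧ Disjoint B S),
      x ^ S.card * (1 - x) ^ (Fintype.card V - S.card)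
      = x ^ A.card * (1 - x) ^ B.card := by
  have h := Finset.prod_add (fun i : V => if i ∈ B then (0:ℝ) else x)
      (fun i : V => if i ∈ A then (0:ℝ) else (1 - x)) Finset.univ
  have hL : ∏ i : V, ((if i ∈ B then (0:ℝ) else x) + (if i ∈ A then (0:ℝ) else (1 - x)))
      = x ^ A.card * (1 - x) ^ B.card := by
    rw [← Finset.prod_sdiff (Finset.subset_univ A)]
    have h1 : ∏ i ∈ A, ((if i ∈ B then (0:ℝ) else x) + (if i ∈ A then (0:ℝ) else (1 - x)))
        = x ^ A.card := by
      rw [Finset.prod_congr rfl (fun i hi => ?_), Finset.prod_const]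
      have hiB : i ∉ B := Finset.disjoint_left.mp hAB hi
      simp [hi, hiB]
    have h2 : ∏ i ∈ Finset.univ \ A,
        ((if i ∈ B then (0:ℝ) else x) + (if i ∈ A then (0:ℝ) else (1 - x)))
        = (1 - x) ^ B.card := by
      have : ∀ i ∈ Finset.univ \ A,
          ((if i ∈ B then (0:ℝ) else x) + (if i ∈ A then (0:ℝ) else (1 - x)))
          = (if i ∈ B then (1 - x) else 1) := by
        intro i hi
        have hiA : i ∉ A := (Finset.mem_sdiff.mp hi).2
        by_cases hiB : i ∈ B <;> simp [hiA, hiB]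
      rw [Finset.prod_congr rfl this, Finset.prod_ite_mem, Finset.prod_const]
      congr 1
      · congr 1
        rw [Finset.inter_eq_right]
        intro b hb
        exact Finset.mem_sdiff.mpr ⟨Finset.mem_univ b, Finset.disjoint_right.mp hAB hb⟩
    rw [h1, h2, mul_comm]
  have hR : ∑ t ∈ (Finset.univ : Finset V).powerset,
      (∏ i ∈ t, if i ∈ B then (0:ℝ) else x) * ∏ i ∈ Finset.univ \ t, (if i ∈ A then (0:ℝ) else (1 - x))
      = ∑ S ∈ Finset.univ.powerset.filter (fun S => A ⊆ S ∧ Disjoint B S),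
        x ^ S.card * (1 - x) ^ (Fintype.card V - S.card) := by
    rw [Finset.sum_filter]
    refine Finset.sum_congr rfl (fun t ht => ?_)
    by_cases hBt : Disjoint B t
    · have e1 : (∏ i ∈ t, if i ∈ B then (0:ℝ) else x) = x ^ t.card := by
        rw [Finset.prod_congr rfl (fun i hi => ?_), Finset.prod_const]
        simp [Finset.disjoint_right.mp hBt hi]
      by_cases hAt : A ⊆ t
      · have e2 : (∏ i ∈ Finset.univ \ t, if i ∈ A then (0:ℝ) else (1 - x))
            = (1 - x) ^ (Fintype.card V - t.card) := by
          rw [Finset.prod_congr rfl (fun i hi => ?_), Finset.prod_const,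
            Finset.card_sdiff_of_subset (Finset.subset_univ t), Finset.card_univ]
          have hit : i ∉ t := (Finset.mem_sdiff.mp hi).2
          have hiA : i ∉ A := fun h => hit (hAt h)
          simp [hiA]
        simp [e1, e2, hAt, hBt]
      · obtain ⟨a, haA, hat⟩ := Finset.not_subset.mp hAt
        have e2 : (∏ i ∈ Finset.univ \ t, if i ∈ A then (0:ℝ) else (1 - x)) = 0 :=
          Finset.prod_eq_zero (Finset.mem_sdiff.mpr ⟨Finset.mem_univ a, hat⟩) (by simp [haA])
        simp [e2, hAt]
    · obtain ⟨b, hbB, hbt⟩ := Finset.not_disjoint_iff.mp hBt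
      have e1 : (∏ i ∈ t, if i ∈ B then (0:ℝ) else x) = 0 :=
        Finset.prod_eq_zero hbt (by simp [hbB])
      simp [e1, hBt]
  rw [hL, hR] at h
  exact h.symm

/-- Finset version of the Delaunay pairs of the induced subhypergraph on `S`. -/
noncomputable def Dfin {V : Type} [DecidableEq V] (E : Finset (Finset V)) (S : Finset V) :
    Finset (Finset V) :=
  (E.image (fun e => e ∩ S)).filter (fun p => p.card = 2)

lemma dfin_spec {V : Type} [DecidableEq V] (E : Finset (Finset V)) (S : Finset V) :
    delaunayPairs E S = ↑(Dfin E S) := by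
  ext p
  simp only [delaunayPairs, Dfin, Set.mem_setOf_eq, Finset.coe_filter, Finset.mem_image,
    Set.mem_setOf_eq]
  tauto

/-- The probabilistic inequality: for a hypergraph with a hereditarily `c`-linear
Delaunay graph and hyperedges of size at most `k`, the set `X` of friend pairs
satisfies `(1-x)^(k-2) · x² · |X| ≤ c · x · n` for every `0 < x < 1`. -/
theorem friendPairs_probabilistic_bound
    (V : Type) [Fintype V] [DecidableEq V] (E : Finset (Finset V)) (c : ℝ) (k : ℕ)
    (hc : 0 < c) (hk : 2 ≤ k)
    (hsize : ∀ e ∈ E, e.card ≤ k)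
    (hlin : HerLinearDelaunay c E)
    (x : ℝ) (hx0 : 0 < x) (hx1 : x < 1) :
    (1 - x) ^ (k - 2) * x ^ 2 * ((friendPairs E).ncard : ℝ) ≤ c * x * (Fintype.card V) := by
  classical
  set n := Fintype.card V with hn
  set w : Finset V → ℝ := fun S => x ^ S.card * (1 - x) ^ (n - S.card) with hwdef
  have hx1' : (0:ℝ) ≤ 1 - x := by linarith
  have hw : ∀ S : Finset V, 0 ≤ w S := fun S =>
    mul_nonneg (pow_nonneg hx0.le _) (pow_nonneg hx1' _)
  -- finset version of friendPairs
  set FP : Finset (Finset V) :=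
    Finset.univ.powerset.filter (fun p => p.card = 2 ∧ ∃ e ∈ E, p ⊆ e) with hFPdef
  have hFPcoe : friendPairs E = ↑FP := by
    ext p
    simp [friendPairs, hFPdef, Finset.subset_univ]
  have hFPcard : (friendPairs E).ncard = FP.card := by
    rw [hFPcoe, Set.ncard_coe_finset]
  have hDcard : ∀ S : Finset V, ((delaunayPairs E S).ncard : ℝ) = (Dfin E S).card := by
    intro S; rw [dfin_spec, Set.ncard_coe_finset]
  -- expectation of |S|
  have hExp : ∑ S ∈ (Finset.univ : Finset V).powerset, w S * S.card = x * n := by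
    have step1 : ∀ S : Finset V, w S * S.card
        = ∑ v ∈ (Finset.univ : Finset V), (if v ∈ S then w S else 0) := by
      intro S
      rw [Finset.sum_ite_mem, Finset.univ_inter, Finset.sum_const, nsmul_eq_mul, mul_comm]
    calc ∑ S ∈ (Finset.univ : Finset V).powerset, w S * S.card
        = ∑ S ∈ (Finset.univ : Finset V).powerset, ∑ v ∈ (Finset.univ : Finset V),
            (if v ∈ S then w S else 0) := by
          exact Finset.sum_congr rfl fun S _ => step1 S
      _ = ∑ v ∈ (Finset.univ : Finset V), ∑ S ∈ (Finset.univ : Finset V).powerset,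
            (if v ∈ S then w S else 0) := Finset.sum_comm
      _ = ∑ v ∈ (Finset.univ : Finset V), x := by
          refine Finset.sum_congr rfl fun v _ => ?_
          rw [← Finset.sum_filter]
          have hfil : (Finset.univ : Finset V).powerset.filter (fun S => v ∈ S)
              = (Finset.univ : Finset V).powerset.filter
                  (fun S => {v} ⊆ S ∧ Disjoint (∅ : Finset V) S) := by
            apply Finset.filter_congr
            intro S _
            simp
          rw [hfil]
          have := sum_w_aux x ({v} : Finset V) (∅ : Finset V) (Finset.disjoint_empty_right _)
          simpa using this
      _ = x * n := by rw [Finset.sum_const, Finset.card_univ, nsmul_eq_mul, mul_comm, hn]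
  -- upper bound
  have hUpper : ∑ S ∈ (Finset.univ : Finset V).powerset, w S * (Dfin E S).card
      ≤ c * x * n := by
    have h1 : ∑ S ∈ (Finset.univ : Finset V).powerset, w S * (Dfin E S).card
        ≤ ∑ S ∈ (Finset.univ : Finset V).powerset, w S * (c * S.card) := by
      refine Finset.sum_le_sum fun S _ => ?_
      rcases S.eq_empty_or_nonempty with rfl | hS
      · have : (Dfin E (∅ : Finset V)).card = 0 := by
          rw [Finset.card_eq_zero]
          ext p
          simp only [Dfin, Finset.mem_filter, Finset.mem_image, Finset.notMem_empty, iff_false]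
          rintro ⟨⟨e, he, rfl⟩, hcard⟩
          simp at hcard
        simp [this]
      · have := hlin S hS
        rw [hDcard S] at this
        exact mul_le_mul_of_nonneg_left this.le (hw S)
    have h2 : ∑ S ∈ (Finset.univ : Finset V).powerset, w S * (c * S.card)
        = c * (x * n) := by
      rw [← hExp, Finset.mul_sum]
      exact Finset.sum_congr rfl fun S _ => by ring
    calc _ ≤ c * (x * n) := h1.trans_eq h2
      _ = c * x * n := by ring
  -- Dfin E S ⊆ FP
  have hDsub : ∀ S : Finset V, Dfin E S ⊆ FP := by
    intro S p hp
    simp only [Dfin, Finset.mem_filter, Finset.mem_image] at hp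
    obtain ⟨⟨e, he, rfl⟩, hcard⟩ := hp
    simp only [hFPdef, Finset.mem_filter, Finset.mem_powerset]
    exact ⟨Finset.subset_univ _, hcard, e, he, Finset.inter_subset_left⟩
  -- lower bound per friend pair
  have hper : ∀ p ∈ FP, x ^ 2 * (1 - x) ^ (k - 2)
      ≤ ∑ S ∈ (Finset.univ : Finset V).powerset, (if p ∈ Dfin E S then w S else 0) := by
    intro p hp
    simp only [hFPdef, Finset.mem_filter, Finset.mem_powerset] at hp
    obtain ⟨-, hp2, e, he, hpe⟩ := hp
    have hsub : (Finset.univ : Finset V).powerset.filter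
          (fun S => p ⊆ S ∧ Disjoint (e \ p) S)
        ⊆ (Finset.univ : Finset V).powerset.filter (fun S => p ∈ Dfin E S) := by
      intro S hS
      simp only [Finset.mem_filter, Finset.mem_powerset] at hS ⊢
      obtain ⟨hSu, hpS, hdis⟩ := hS
      refine ⟨hSu, ?_⟩
      have heS : e ∩ S = p := by
        apply Finset.Subset.antisymm
        · intro a ha
          rw [Finset.mem_inter] at ha
          by_contra hap
          exact Finset.disjoint_left.mp hdis (Finset.mem_sdiff.mpr ⟨ha.1, hap⟩) ha.2
        · exact Finset.subset_inter hpe hpS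
      simp only [Dfin, Finset.mem_filter, Finset.mem_image]
      exact ⟨⟨e, he, heS⟩, hp2⟩
    have hged : Disjoint p (e \ p) := Finset.disjoint_sdiff
    have hsum := sum_w_aux x p (e \ p) hged
    have hcard2 : (e \ p).card = e.card - 2 := by
      rw [Finset.card_sdiff_of_subset hpe, hp2]
    have hmono : (1 - x) ^ (k - 2) ≤ (1 - x) ^ (e.card - 2) := by
      apply pow_le_pow_of_le_one hx1' (by linarith)
      exact Nat.sub_le_sub_right (hsize e he) 2
    calc x ^ 2 * (1 - x) ^ (k - 2)
        ≤ x ^ 2 * (1 - x) ^ (e.card - 2) :=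
          mul_le_mul_of_nonneg_left hmono (pow_nonneg hx0.le 2)
      _ = x ^ p.card * (1 - x) ^ (e \ p).card := by rw [hp2, hcard2]
      _ = ∑ S ∈ (Finset.univ : Finset V).powerset.filter
            (fun S => p ⊆ S ∧ Disjoint (e \ p) S),
            x ^ S.card * (1 - x) ^ (n - S.card) := hsum.symm
      _ ≤ ∑ S ∈ (Finset.univ : Finset V).powerset.filter
            (fun S => p ∈ Dfin E S), w S := by
          exact Finset.sum_le_sum_of_subset_of_nonneg hsub (fun S _ _ => hw S)
      _ = ∑ S ∈ (Finset.univ : Finset V).powerset, (if p ∈ Dfin E S then w S else 0) := by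
          rw [Finset.sum_filter]
  -- combine
  have hswap : ∑ S ∈ (Finset.univ : Finset V).powerset, w S * (Dfin E S).card
      = ∑ p ∈ FP, ∑ S ∈ (Finset.univ : Finset V).powerset,
          (if p ∈ Dfin E S then w S else 0) := by
    rw [Finset.sum_comm]
    refine Finset.sum_congr rfl fun S _ => ?_
    have hfe : FP.filter (fun p => p ∈ Dfin E S) = Dfin E S := by
      rw [Finset.filter_mem_eq_inter, Finset.inter_eq_right]
      exact hDsub S
    rw [← Finset.sum_filter, hfe, Finset.sum_const, nsmul_eq_mul, mul_comm]
  have hLower : (FP.card : ℝ) * (x ^ 2 * (1 - x) ^ (k - 2))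
      ≤ ∑ S ∈ (Finset.univ : Finset V).powerset, w S * (Dfin E S).card := by
    rw [hswap]
    calc (FP.card : ℝ) * (x ^ 2 * (1 - x) ^ (k - 2))
        = ∑ _p ∈ FP, x ^ 2 * (1 - x) ^ (k - 2) := by
          rw [Finset.sum_const, nsmul_eq_mul]
      _ ≤ _ := Finset.sum_le_sum hper
  rw [hFPcard]
  calc (1 - x) ^ (k - 2) * x ^ 2 * (FP.card : ℝ)
      = (FP.card : ℝ) * (x ^ 2 * (1 - x) ^ (k - 2)) := by ring
    _ ≤ ∑ S ∈ (Finset.univ : Finset V).powerset, w S * (Dfin E S).card := hLower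
    _ ≤ c * x * n := hUpper
end

section
/- Let 0 < α < 1 and let 𝓕 be a finite family of subsets of ℝ^d with the following property: for every finite nonempty multiset 𝓕' whose elements are members of 𝓕, there exists a point x ∈ ℝ^d belonging to at least α·|𝓕'| elements of 𝓕' (counted with multiplicity). Then there exists a finite nonempty multiset Q of points of ℝ^d such that every member of 𝓕 contains at least α·|Q| points of Q (counted with multiplicity). -/
/-!
Replace every point by a representative with the same membership pattern in `F`, so that only
finitely many points matter and the problem becomes a matrix game: rows are the members of `F`,
columns are the representatives, and entry `(A, r)` is `1` if `r ∈ A`. The hypothesis says that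
every mixed strategy of the row player with rational weights is answered by a column paying at
least `α`; the minimax theorem then yields a column strategy guaranteeing `α` against every row,
and clearing its denominators gives `Q`.

Both the hypothesis and the conclusion only speak about rational strategies, so the minimax
theorem is proved over an arbitrary linearly ordered field, following Gale–Kuhn–Tucker: a
skew-symmetric game has a nonnegative equilibrium by Farkas' lemma (in Bartl's algebraic form),
and every game with positive entries embeds into a skew-symmetric one.
-/

open Matrix

section Farkas

variable {K V ι : Type*} [Field K] [LinearOrder K] [IsStrictOrderedRing K]
  [AddCommGroup V] [Module K V]

theorem Module.Dual.eq_smul_add_sum_smul_of_sub_eq {s : Finset ι} {a : ι → Module.Dual K V}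
    {b p : Module.Dual K V} {c : ι → K} {w : V}
    (h : b - (b w / p w) • p = ∑ i ∈ s, c i • (a i - (a i w / p w) • p)) :
    b = ((b w - ∑ i ∈ s, c i * a i w) / p w) • p + ∑ i ∈ s, c i • a i := by
  ext v
  have hv := congrArg (· v) h
  simp only [LinearMap.sub_apply, LinearMap.smul_apply, LinearMap.add_apply,
    LinearMap.sum_apply, smul_eq_mul, mul_sub, Finset.sum_sub_distrib] at hv ⊢
  have hsum : ∑ i ∈ s, c i * (a i w / p w * p v) = (∑ i ∈ s, c i * a i w / p w) * p v := by
    rw [Finset.sum_mul]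
    exact Finset.sum_congr rfl fun i _ => by ring
  rw [sub_div, Finset.sum_div]
  linear_combination hv - hsum

theorem Module.Dual.exists_nonneg_eq_sum_smul_of_forall_nonneg (s : Finset ι)
    (a : ι → Module.Dual K V) (b : Module.Dual K V) (h : ∀ v, (∀ i ∈ s, 0 ≤ a i v) → 0 ≤ b v) :
    ∃ c : ι → K, 0 ≤ c ∧ b = ∑ i ∈ s, c i • a i := by
  classical
  induction s using Finset.induction_on generalizing a b with
  | empty =>
    refine ⟨0, le_rfl, LinearMap.ext fun v => ?_⟩
    have := h (-v) (by simp)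
    simpa using le_antisymm (by simpa using this) (h v (by simp))
  | insert i₀ s hi₀ ih =>
    have sum_update (c : ι → K) (t : K) :
        ∑ i ∈ insert i₀ s, Function.update c i₀ t i • a i = t • a i₀ + ∑ i ∈ s, c i • a i := by
      rw [Finset.sum_insert hi₀, Function.update_self]
      congr 1
      exact Finset.sum_congr rfl fun i hi => by
        rw [Function.update_of_ne (ne_of_mem_of_not_mem hi hi₀)]
    by_cases hs : ∀ v, (∀ i ∈ s, 0 ≤ a i v) → 0 ≤ b v
    · obtain ⟨c, hc, rfl⟩ := ih a b hs
      exact ⟨Function.update c i₀ 0, le_update_iff.2 ⟨le_rfl, fun i _ => hc i⟩,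
        by rw [sum_update, zero_smul, zero_add]⟩
    push Not at hs
    obtain ⟨w, hw, hbw⟩ := hs
    have hw₀ : a i₀ w < 0 := by
      by_contra! hw₀
      exact hbw.not_ge (h w (Finset.forall_mem_insert .. |>.2 ⟨hw₀, hw⟩))
    -- On the hyperplane `a i₀ = 0` the forms of `s` alone force `b ≥ 0`; projecting along `w`
    -- onto that hyperplane gives an instance with one form fewer.
    let proj (f : Module.Dual K V) : Module.Dual K V := f - (f w / a i₀ w) • a i₀
    obtain ⟨c, hc, hbc⟩ := ih (fun i => proj (a i)) (proj b) fun v hv => by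
      have key (f : Module.Dual K V) : f (v - (a i₀ v / a i₀ w) • w) = proj f v := by
        simp only [proj, map_sub, map_smul, LinearMap.sub_apply, LinearMap.smul_apply, smul_eq_mul]
        field_simp
      rw [← key]
      refine h _ (Finset.forall_mem_insert .. |>.2 ⟨?_, fun i hi => (key (a i)).symm ▸ hv i hi⟩)
      rw [key]
      simp [proj, hw₀.ne]
    refine ⟨Function.update c i₀ ((b w - ∑ i ∈ s, c i * a i w) / a i₀ w),
      le_update_iff.2 ⟨div_nonneg_of_nonpos ?_ hw₀.le, fun i _ => hc i⟩,
      by rw [sum_update]; exact Module.Dual.eq_smul_add_sum_smul_of_sub_eq hbc⟩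
    linarith [Finset.sum_nonneg fun i hi => mul_nonneg (hc i) (hw i hi)]

end Farkas

section Minimax

variable {K I J : Type*} [Field K] [LinearOrder K] [IsStrictOrderedRing K]

theorem inv_sum_smul_mem_stdSimplex [Fintype I] {w : I → K} (hw : 0 ≤ w)
    (hw_sum : 0 < ∑ i, w i) : (∑ i, w i)⁻¹ • w ∈ stdSimplex K I :=
  ⟨fun i => smul_nonneg (inv_nonneg.2 hw_sum.le) (hw i), by simp [← Finset.mul_sum, hw_sum.ne']⟩

theorem Matrix.dotProduct_mulVec_self_eq_zero_of_transpose_eq_neg [Fintype I] {S : Matrix I I K}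
    (hS : Sᵀ = -S) (u : I → K) : u ⬝ᵥ (S *ᵥ u) = 0 := by
  have h : u ⬝ᵥ (S *ᵥ u) = -(S *ᵥ u ⬝ᵥ u) := by
    rw [dotProduct_mulVec, ← mulVec_transpose, hS, neg_mulVec, neg_dotProduct]
  rw [dotProduct_comm] at h ⊢
  linarith

theorem Matrix.exists_mem_stdSimplex_mulVec_nonneg_of_transpose_eq_neg [Fintype I] [Nonempty I]
    {S : Matrix I I K} (hS : Sᵀ = -S) : ∃ z ∈ stdSimplex K I, 0 ≤ S *ᵥ z := by
  by_contra! hS_no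
  have hsum_nonpos (z : I → K) (hz : 0 ≤ z) (hSz : 0 ≤ S *ᵥ z) : ∑ i, z i ≤ 0 := by
    by_contra! hpos
    refine hS_no _ (inv_sum_smul_mem_stdSimplex hz hpos) ?_
    rw [mulVec_smul]
    exact smul_nonneg (inv_nonneg.2 hpos.le) hSz
  obtain ⟨c, hc, hcS⟩ := Module.Dual.exists_nonneg_eq_sum_smul_of_forall_nonneg Finset.univ
    (Sum.elim (fun i => LinearMap.proj i) (fun i => LinearMap.proj i ∘ₗ S.mulVecLin))
    (-∑ i, LinearMap.proj i) fun z hz => by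
      simpa using hsum_nonpos z (fun i => by simpa using hz (.inl i) (Finset.mem_univ _))
        (fun i => by simpa using hz (.inr i) (Finset.mem_univ _))
  set p := c ∘ Sum.inl
  set u := c ∘ Sum.inr
  have hp : 0 ≤ p := fun i => hc _
  have hu : 0 ≤ u := fun i => hc _
  have eval (z : I → K) : -∑ i, z i = p ⬝ᵥ z + u ⬝ᵥ (S *ᵥ z) := by
    simpa [Fintype.sum_sum_type, dotProduct, p, u] using congrArg (· z) hcS
  have hu_zero : u = 0 := by
    have h := eval u
    rw [dotProduct_mulVec_self_eq_zero_of_transpose_eq_neg hS, add_zero] at h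
    have hu_sum : ∑ i, u i = 0 := le_antisymm
      (by linarith [dotProduct_nonneg_of_nonneg hp hu]) (Finset.sum_nonneg fun i _ => hu i)
    ext i
    exact (Finset.sum_eq_zero_iff_of_nonneg fun i _ => hu i).1 hu_sum i (Finset.mem_univ i)
  have h := eval 1
  rw [hu_zero, zero_dotProduct, add_zero, dotProduct_one] at h
  have hn : ∑ i : I, (1 : I → K) i = Fintype.card I := by simp
  have hn_pos : (0 : K) < Fintype.card I := Nat.cast_pos.2 Fintype.card_pos
  linarith [Finset.sum_nonneg fun i (_ : i ∈ Finset.univ) => hp i]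

def Matrix.symmetricGame (M : Matrix I J K) : Matrix ((I ⊕ J) ⊕ Unit) ((I ⊕ J) ⊕ Unit) K :=
  fromBlocks (fromBlocks 0 M (-Mᵀ) 0) (of fun k _ => Sum.elim (-1) 1 k)
    (of fun _ k => Sum.elim 1 (-1) k) 0

omit [LinearOrder K] [IsStrictOrderedRing K] in
theorem Matrix.symmetricGame_transpose (M : Matrix I J K) :
    M.symmetricGameᵀ = -M.symmetricGame := by
  ext ((i | j) | u) ((i' | j') | u') <;> simp [symmetricGame]

variable [Fintype I] [Fintype J]

theorem Matrix.le_mulVec_and_vecMul_le_of_symmetricGame_mulVec_nonneg {M : Matrix I J K}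
    {z : (I ⊕ J) ⊕ Unit → K} (hz : 0 ≤ M.symmetricGame *ᵥ z) :
    (∀ i, z (.inr ()) ≤ (M *ᵥ fun j => z (.inl (.inr j))) i) ∧
      (∀ j, ((fun i => z (.inl (.inl i))) ᵥ* M) j ≤ z (.inr ())) ∧
      ∑ j, z (.inl (.inr j)) ≤ ∑ i, z (.inl (.inl i)) := by
  refine ⟨fun i => ?_, fun j => ?_, ?_⟩
  · simpa [symmetricGame, mulVec, dotProduct, Fintype.sum_sum_type] using hz (.inl (.inl i))
  · simpa [symmetricGame, mulVec, vecMul, dotProduct, Fintype.sum_sum_type, mul_comm]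
      using hz (.inl (.inr j))
  · simpa [symmetricGame, mulVec, dotProduct, Fintype.sum_sum_type] using hz (.inr ())

theorem Matrix.mul_sum_le_mul_sum {M : Matrix I J K} {x : J → K} {y : I → K} {s t : K}
    (hx : 0 ≤ x) (hy : 0 ≤ y) (hxs : ∀ i, s ≤ (M *ᵥ x) i) (hyt : ∀ j, (y ᵥ* M) j ≤ t) :
    s * ∑ i, y i ≤ t * ∑ j, x j :=
  calc s * ∑ i, y i = ∑ i, y i * s := by rw [Finset.mul_sum]; simp [mul_comm]
    _ ≤ y ⬝ᵥ (M *ᵥ x) := Finset.sum_le_sum fun i _ => mul_le_mul_of_nonneg_left (hxs i) (hy i)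
    _ = (y ᵥ* M) ⬝ᵥ x := dotProduct_mulVec y M x
    _ ≤ ∑ j, t * x j := Finset.sum_le_sum fun j _ => mul_le_mul_of_nonneg_right (hyt j) (hx j)
    _ = t * ∑ j, x j := by rw [Finset.mul_sum]

variable [Nonempty I] [Nonempty J]

theorem Matrix.exists_saddle_of_pos (M : Matrix I J K) (hM : ∀ i j, 0 < M i j) :
    ∃ x ∈ stdSimplex K J, ∃ y ∈ stdSimplex K I, ∃ t : K,
      (∀ i, t ≤ (M *ᵥ x) i) ∧ ∀ j, (y ᵥ* M) j ≤ t := by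
  obtain ⟨z, ⟨hz, hz_sum⟩, hSz⟩ :=
    exists_mem_stdSimplex_mulVec_nonneg_of_transpose_eq_neg M.symmetricGame_transpose
  obtain ⟨hrow, hcol, hxy⟩ := le_mulVec_and_vecMul_le_of_symmetricGame_mulVec_nonneg hSz
  set y : I → K := fun i => z (.inl (.inl i))
  set x : J → K := fun j => z (.inl (.inr j))
  set s := z (.inr ())
  have hy : 0 ≤ y := fun i => hz _
  have hx : 0 ≤ x := fun j => hz _
  -- Positivity of `M` rules out the degenerate equilibria with `s = 0`.
  have hs_pos : 0 < s := by
    refine (hz (.inr ())).lt_of_ne fun hs => ?_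
    obtain ⟨j₀⟩ := ‹Nonempty J›
    have hy_zero (i : I) : y i = 0 := by
      have h := (Finset.sum_eq_zero_iff_of_nonneg fun i _ => mul_nonneg (hy i) (hM i j₀).le).1
        (le_antisymm (hs ▸ hcol j₀) (Finset.sum_nonneg fun i _ => mul_nonneg (hy i) (hM i j₀).le))
        i (Finset.mem_univ i)
      exact (mul_eq_zero.1 h).resolve_right (hM i j₀).ne'
    have hx_sum : ∑ j, x j = 0 :=
      le_antisymm (by simpa [hy_zero] using hxy) (Finset.sum_nonneg fun j _ => hx j)
    have hz_sum' : ∑ i, y i + ∑ j, x j + s = 1 := by simpa [Fintype.sum_sum_type] using hz_sum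
    simp only [hy_zero, hx_sum, Finset.sum_const_zero, zero_add] at hz_sum'
    exact zero_ne_one (hs.trans hz_sum')
  have hxy_eq : ∑ j, x j = ∑ i, y i :=
    le_antisymm hxy (le_of_mul_le_mul_left (mul_sum_le_mul_sum hx hy hrow hcol) hs_pos)
  have hx_pos : 0 < ∑ j, x j := by
    refine (Finset.sum_nonneg fun j _ => hx j).lt_of_ne fun hx_sum => ?_
    obtain ⟨i₀⟩ := ‹Nonempty I›
    have hx_zero : x = 0 := funext fun j =>
      (Finset.sum_eq_zero_iff_of_nonneg fun j _ => hx j).1 hx_sum.symm j (Finset.mem_univ j)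
    simpa [hx_zero] using hs_pos.trans_le (hrow i₀)
  refine ⟨_, inv_sum_smul_mem_stdSimplex hx hx_pos, _,
    inv_sum_smul_mem_stdSimplex hy (hxy_eq ▸ hx_pos), (∑ j, x j)⁻¹ * s, fun i => ?_, fun j => ?_⟩
  · rw [mulVec_smul]
    exact mul_le_mul_of_nonneg_left (hrow i) (inv_nonneg.2 hx_pos.le)
  · rw [smul_vecMul, ← hxy_eq]
    exact mul_le_mul_of_nonneg_left (hcol j) (inv_nonneg.2 hx_pos.le)

theorem Matrix.exists_saddle (M : Matrix I J K) :
    ∃ x ∈ stdSimplex K J, ∃ y ∈ stdSimplex K I, ∃ t : K,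
      (∀ i, t ≤ (M *ᵥ x) i) ∧ ∀ j, (y ᵥ* M) j ≤ t := by
  obtain ⟨⟨i₀, j₀⟩, hmin⟩ := Finite.exists_min fun p : I × J => M p.1 p.2
  set C : Matrix I J K := of fun _ _ => 1 - M i₀ j₀
  obtain ⟨x, hx, y, hy, t, hxt, hyt⟩ := exists_saddle_of_pos (M + C) fun i j => by
    simp only [add_apply, C, of_apply]
    linarith [hmin (i, j)]
  refine ⟨x, hx, y, hy, t - (1 - M i₀ j₀), fun i => ?_, fun j => ?_⟩
  · have hC : (C *ᵥ x) i = 1 - M i₀ j₀ := by simp [C, mulVec, dotProduct, ← Finset.mul_sum, hx.2]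
    have := hxt i
    rw [add_mulVec, Pi.add_apply, hC] at this
    linarith
  · have hC : (y ᵥ* C) j = 1 - M i₀ j₀ := by simp [C, vecMul, dotProduct, ← Finset.sum_mul, hy.2]
    have := hyt j
    rw [vecMul_add, Pi.add_apply, hC] at this
    linarith

end Minimax

theorem Rat.exists_natCast_eq_mul {q : ℚ} (hq : 0 ≤ q) {D : ℕ} (hD : q.den ∣ D) :
    ∃ m : ℕ, (m : ℚ) = D * q := by
  obtain ⟨k, rfl⟩ := hD
  refine ⟨q.num.toNat * k, ?_⟩
  rw [Nat.cast_mul, Nat.cast_mul, ← Int.cast_natCast, Int.toNat_of_nonneg (Rat.num_nonneg.2 hq),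
    ← Rat.mul_den_eq_num]
  ring

theorem exists_multiset_countP_eq_card_mul {X J : Type*} [Fintype J] (p : J → X) {w : J → ℚ}
    (hw : w ∈ stdSimplex ℚ J) :
    ∃ Q : Multiset X, Q ≠ 0 ∧ (∀ a ∈ Q, a ∈ Set.range p) ∧ ∀ (P : X → Prop) [DecidablePred P],
      (Q.countP P : ℚ) = Q.card * ∑ j, if P (p j) then w j else 0 := by
  set D := ∏ j, (w j).den
  have hD : 0 < D := Finset.prod_pos fun j _ => (w j).den_pos
  choose n hn using fun j => Rat.exists_natCast_eq_mul (hw.1 j)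
    (Finset.dvd_prod_of_mem (fun j => (w j).den) (Finset.mem_univ j))
  have hcard : (Multiset.card (∑ j, n j • {p j}) : ℚ) = D := by
    simp [Multiset.card_sum, hn, ← Finset.mul_sum, hw.2, D]
  refine ⟨∑ j, n j • {p j}, ?_, ?_, fun P _ => ?_⟩
  · rw [← Multiset.card_pos]
    exact_mod_cast hcard ▸ (Nat.cast_pos.2 hD : (0 : ℚ) < D)
  · intro a ha
    obtain ⟨j, -, hj⟩ := Multiset.mem_sum.1 ha
    exact ⟨j, (Multiset.mem_singleton.1 (Multiset.mem_of_mem_nsmul hj)).symm⟩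
  · rw [hcard, ← Multiset.coe_countPAddMonoidHom, map_sum]
    simp [Multiset.countP_nsmul, ← Multiset.cons_zero, Multiset.countP_cons, apply_ite, hn,
      Finset.mul_sum, D]

section Incidence

variable {E : Type*}

theorem Finset.exists_finset_forall_exists_mem_iff (F : Finset (Set E)) :
    ∃ R : Finset E, ∀ x, ∃ r ∈ R, ∀ A ∈ F, r ∈ A ↔ x ∈ A := by
  let pattern (x : E) (A : F) : Prop := x ∈ A.1
  refine ⟨(Set.finite_range (Set.rangeSplitting pattern)).toFinset, fun x =>
    ⟨Set.rangeSplitting pattern ⟨pattern x, x, rfl⟩, by simp, fun A hA => ?_⟩⟩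
  exact Iff.of_eq (congrFun (Set.apply_rangeSplitting pattern _) ⟨A, hA⟩)

noncomputable def Finset.incidenceMatrix (F : Finset (Set E)) (R : Finset E) : Matrix F R ℚ :=
  of fun A r => (A : Set E).indicator 1 r

variable {F : Finset (Set E)} {R : Finset E} {t : ℚ}

open scoped Classical in
theorem le_of_forall_vecMul_incidenceMatrix_le {α : ℝ}
    (h : ∀ F' : Multiset (Set E), (∀ A ∈ F', A ∈ F) → F' ≠ 0 →
      ∃ x : E, α * (Multiset.card F' : ℝ) ≤ ((F'.countP (fun A => x ∈ A) : ℕ) : ℝ))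
    (hR : ∀ x, ∃ r ∈ R, ∀ A ∈ F, r ∈ A ↔ x ∈ A) {y : F → ℚ} (hy : y ∈ stdSimplex ℚ F)
    (hyt : ∀ r, (y ᵥ* F.incidenceMatrix R) r ≤ t) : α ≤ t := by
  obtain ⟨F', hF'0, hF'F, hF'count⟩ := exists_multiset_countP_eq_card_mul Subtype.val hy
  obtain ⟨z, hz⟩ := h F' (fun A hA => by obtain ⟨⟨B, hB⟩, rfl⟩ := hF'F A hA; exact hB) hF'0
  obtain ⟨r, hr, hrz⟩ := hR z
  have hcount : (F'.countP (z ∈ ·) : ℚ) = F'.card * (y ᵥ* F.incidenceMatrix R) ⟨r, hr⟩ := by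
    rw [hF'count]
    congr 1
    exact Finset.sum_congr rfl fun A _ => by
      simp [Finset.incidenceMatrix, Set.indicator_apply, hrz A A.2]
  have hcard : (0 : ℝ) < F'.card := by exact_mod_cast Multiset.card_pos.2 hF'0
  refine le_of_mul_le_mul_right ?_ hcard
  calc α * F'.card ≤ F'.countP (z ∈ ·) := hz
    _ = F'.card * ((y ᵥ* F.incidenceMatrix R) ⟨r, hr⟩ : ℝ) := by exact_mod_cast hcount
    _ ≤ F'.card * t := mul_le_mul_of_nonneg_left (by exact_mod_cast hyt _) hcard.le
    _ = t * F'.card := mul_comm _ _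

open scoped Classical in
theorem exists_multiset_le_countP_of_le_incidenceMatrix_mulVec {x : R → ℚ}
    (hx : x ∈ stdSimplex ℚ R) (hxt : ∀ A, t ≤ (F.incidenceMatrix R *ᵥ x) A) :
    ∃ Q : Multiset E, Q ≠ 0 ∧
      ∀ A ∈ F, (t : ℝ) * (Multiset.card Q : ℝ) ≤ ((Q.countP (fun x => x ∈ A) : ℕ) : ℝ) := by
  obtain ⟨Q, hQ0, -, hQcount⟩ := exists_multiset_countP_eq_card_mul Subtype.val hx
  refine ⟨Q, hQ0, fun A hA => ?_⟩
  have hcount : (Q.countP (· ∈ A) : ℚ) = Q.card * (F.incidenceMatrix R *ᵥ x) ⟨A, hA⟩ := by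
    rw [hQcount]
    simp [Finset.incidenceMatrix, mulVec, dotProduct, Set.indicator_apply]
  calc (t : ℝ) * Q.card ≤ Q.card * ((F.incidenceMatrix R *ᵥ x) ⟨A, hA⟩ : ℝ) := by
        rw [mul_comm]
        exact mul_le_mul_of_nonneg_left (by exact_mod_cast hxt _) (Nat.cast_nonneg _)
    _ = Q.countP (· ∈ A) := by exact_mod_cast hcount.symm

end Incidence

open scoped Classical in
theorem lp_duality_lemma_general
    (d : ℕ) (α : ℝ)
    (F : Finset (Set (EuclideanSpace ℝ (Fin d))))
    (h : ∀ F' : Multiset (Set (EuclideanSpace ℝ (Fin d))),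
      (∀ A ∈ F', A ∈ F) → F' ≠ 0 →
      ∃ x : EuclideanSpace ℝ (Fin d),
        α * (Multiset.card F' : ℝ) ≤ ((F'.countP (fun A => x ∈ A) : ℕ) : ℝ)) :
    ∃ Q : Multiset (EuclideanSpace ℝ (Fin d)), Q ≠ 0 ∧
      ∀ A ∈ F, α * (Multiset.card Q : ℝ) ≤ ((Q.countP (fun x => x ∈ A) : ℕ) : ℝ) := by
  rcases F.eq_empty_or_nonempty with rfl | hF
  · exact ⟨{0}, Multiset.singleton_ne_zero 0, by simp⟩
  obtain ⟨R, hR⟩ := F.exists_finset_forall_exists_mem_iff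
  have : Nonempty F := hF.coe_sort
  have : Nonempty R := let ⟨r, hr, _⟩ := hR 0; ⟨⟨r, hr⟩⟩
  obtain ⟨x, hx, y, hy, t, hxt, hyt⟩ := (F.incidenceMatrix R).exists_saddle
  have hαt := le_of_forall_vecMul_incidenceMatrix_le h hR hy hyt
  obtain ⟨Q, hQ0, hQ⟩ := exists_multiset_le_countP_of_le_incidenceMatrix_mulVec hx hxt
  exact ⟨Q, hQ0, fun A hA => (mul_le_mul_of_nonneg_right hαt (Nat.cast_nonneg _)).trans (hQ A hA)⟩

open scoped Classical in
/-- The LP-duality lemma of Alon–Kleitman: if every finite nonempty multiset of members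
of `F` has a point covering an `α`-fraction of it (with multiplicity), then there is a
finite nonempty multiset `Q` of points such that every member of `F` contains at least
an `α`-fraction of `Q` (with multiplicity). -/
theorem lp_duality_lemma
    (d : ℕ) (α : ℝ) (hα0 : 0 < α) (hα1 : α < 1)
    (F : Finset (Set (EuclideanSpace ℝ (Fin d))))
    (h : ∀ F' : Multiset (Set (EuclideanSpace ℝ (Fin d))),
      (∀ A ∈ F', A ∈ F) → F' ≠ 0 →
      ∃ x : EuclideanSpace ℝ (Fin d),
        α * (Multiset.card F' : ℝ) ≤ ((F'.countP (fun A => x ∈ A) : ℕ) : ℝ)) :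
    ∃ Q : Multiset (EuclideanSpace ℝ (Fin d)), Q ≠ 0 ∧
      ∀ A ∈ F, α * (Multiset.card Q : ℝ) ≤ ((Q.countP (fun x => x ∈ A) : ℕ) : ℝ) :=
  lp_duality_lemma_general d α F h
end
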